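/- Let α ∈ [0,1), C ≥ 0, D > 0, T > 0 and p ∈ ℕ. Then there exist K > 0 and h_0 > 0, depending only on α, C, D, T and p, with the following property: for all h ∈ (0, h_0], all ε ∈ (0, D·h], all N ∈ ℕ with N·h ≤ T, and all sequences (x_n)_{n=0}^{N}, (z_n)_{n=0}^{N} in normed vector spaces satisfying ‖x_0‖ ≤ C·ε^{p+1}, ‖z_0‖ ≤ C·ε^{p+1}, and for all 1 ≤ n ≤ N: ‖x_n‖ ≤ (1 + C·h)·‖x_{n−1}‖ + C·ε·‖z_{n−1}‖ + C·ε^{p+1} and ‖z_n‖ ≤ (α + C·ε)·‖z_{n−1}‖ + C·‖x_{n−1}‖ + C·ε^{p+1}/h, one has ‖x_n‖ ≤ K·ε^{p+1}/h and ‖z_n‖ ≤ K·ε^{p+1}/h for all 0 ≤ n ≤ N. -/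

import Mathlib

open Real

/-!
Fix `β ∈ (α, 1)` and put `γ = C / (1 - β)`. Once `h` is so small that `α + C ε ≤ β`, the
weighted sum `V n = ‖x n‖ + γ ε ‖z n‖` absorbs both couplings:
`V (n + 1) ≤ (1 + (C + γ C D) h) V n + C (1 + γ D) ε ^ (p + 1)`.
Discrete Grönwall over the at most `T / h` steps gives `V n = O(ε ^ (p + 1) / h)`, hence the bound
on `x`. Fed into the `z`-recurrence, it leaves a contraction with factor `β` and forcing
`O(ε ^ (p + 1) / h)`, whose iterates never exceed the larger of `‖z 0‖` and the fixed point.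
-/

theorem le_mul_exp_of_le_one_add_mul_add {u : ℕ → ℝ} {a b : ℝ} {N : ℕ} (hu : ∀ n, 0 ≤ u n)
    (ha : 0 ≤ a) (hb : 0 ≤ b) (hrec : ∀ n < N, u (n + 1) ≤ (1 + a) * u n + b)
    {n : ℕ} (hn : n ≤ N) : u n ≤ (u 0 + n * b) * exp (n * a) := by
  -- Freezing `u` after time `N` extends the recurrence to all times.
  set v : ℕ → ℝ := fun k ↦ u (min k N)
  have hv : ∀ k ≥ 0, v (k + 1) ≤ (1 + a) * v k + b := by
    intro k _
    rcases lt_or_ge k N with hk | hk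
    · simpa [v, Nat.min_eq_left hk, Nat.min_eq_left hk.le] using hrec k hk
    · simp only [v, Nat.min_eq_right hk, Nat.min_eq_right (hk.trans k.le_succ)]
      nlinarith [hu N]
  have := discrete_gronwall (u := v) (c := fun _ ↦ a) (b := fun _ ↦ b) (n₀ := 0) (hu _) hv
    (fun _ _ ↦ ha) (fun _ _ ↦ hb) (Nat.zero_le n)
  simpa [v, Nat.min_eq_left hn] using this

theorem le_max_div_one_sub_of_le_mul_add {u : ℕ → ℝ} {β f : ℝ} {N : ℕ} (hβ0 : 0 ≤ β)
    (hβ1 : β < 1) (hrec : ∀ n < N, u (n + 1) ≤ β * u n + f) {n : ℕ} (hn : n ≤ N) :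
    u n ≤ max (u 0) (f / (1 - β)) := by
  induction n with
  | zero => exact le_max_left _ _
  | succ n ih =>
    set m := max (u 0) (f / (1 - β))
    have hf : f ≤ (1 - β) * m := by
      rw [← div_le_iff₀' (by linarith)]; exact le_max_right _ _
    calc u (n + 1) ≤ β * u n + f := hrec n hn
      _ ≤ β * m + (1 - β) * m := by gcongr; exact ih (by omega)
      _ = m := by ring

theorem add_mul_le_of_le_div {α β C D h ε : ℝ} (hC : 0 ≤ C) (hD : 0 ≤ D) (hh : 0 ≤ h)
    (hεh : ε ≤ D * h) (hhβ : h ≤ (β - α) / (C * D + 1)) : α + C * ε ≤ β := by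
  have := (le_div_iff₀ (by positivity)).mp hhβ
  nlinarith [mul_le_mul_of_nonneg_left hεh hC]

theorem add_div_one_sub_mul_le {β C c : ℝ} (hC : 0 ≤ C) (hβ : β < 1) (hc : c ≤ β) :
    C + C / (1 - β) * c ≤ C / (1 - β) := by
  have hβ' : 0 < 1 - β := by linarith
  calc C + C / (1 - β) * c ≤ C + C / (1 - β) * β := by gcongr
    _ = C / (1 - β) := by field_simp; ring

section TwoComponent

variable {α C D γ h ε δ : ℝ}

theorem two_component_lyapunov_step {a b a' b' : ℝ} (hC : 0 ≤ C) (hγ : 0 ≤ γ) (hh : 0 < h)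
    (hε : 0 ≤ ε) (hεh : ε ≤ D * h) (hδ : 0 ≤ δ) (ha : 0 ≤ a) (hb : 0 ≤ b)
    (hcoef : C + γ * (α + C * ε) ≤ γ)
    (ha' : a' ≤ (1 + C * h) * a + C * ε * b + C * δ)
    (hb' : b' ≤ (α + C * ε) * b + C * a + C * δ / h) :
    a' + γ * ε * b' ≤ (1 + (C + γ * C * D) * h) * (a + γ * ε * b) + C * (1 + γ * D) * δ := by
  have hεb' : γ * ε * b' ≤ γ * ε * ((α + C * ε) * b + C * a + C * δ / h) := by gcongr
  have hx : γ * ε * (C * a) ≤ γ * C * D * h * a := by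
    have := mul_le_mul_of_nonneg_left hεh (by positivity : 0 ≤ γ * C * a); linarith
  have hz : ε * (C + γ * (α + C * ε)) * b ≤ (1 + (C + γ * C * D) * h) * (γ * ε * b) := by
    have : 0 ≤ (C + γ * C * D) * h * (γ * ε * b) := by
      have : 0 ≤ D := by nlinarith
      positivity
    nlinarith [mul_le_mul_of_nonneg_left hcoef (by positivity : 0 ≤ ε * b)]
  have hf : γ * ε * (C * δ / h) ≤ γ * C * D * δ := by
    rw [mul_div_assoc', div_le_iff₀ hh]
    have := mul_le_mul_of_nonneg_left hεh (by positivity : 0 ≤ γ * C * δ); linarith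
  linarith

variable {T : ℝ} {N : ℕ} {a b : ℕ → ℝ}

theorem two_component_nonstiff_le (hC : 0 ≤ C) (hγ : 0 ≤ γ) (hh : 0 < h) (hh1 : h ≤ 1)
    (hε : 0 ≤ ε) (hεh : ε ≤ D * h) (hδ : 0 ≤ δ) (hNT : N * h ≤ T) (hcoef : C + γ * (α + C * ε) ≤ γ)
    (ha : ∀ n, 0 ≤ a n) (hb : ∀ n, 0 ≤ b n) (ha0 : a 0 ≤ C * δ) (hb0 : b 0 ≤ C * δ)
    (hrec_a : ∀ n < N, a (n + 1) ≤ (1 + C * h) * a n + C * ε * b n + C * δ)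
    (hrec_b : ∀ n < N, b (n + 1) ≤ (α + C * ε) * b n + C * a n + C * δ / h)
    {n : ℕ} (hn : n ≤ N) :
    a n ≤ exp ((C + γ * C * D) * T) * (T + 1) * (C * (1 + γ * D)) * δ / h := by
  set L := C + γ * C * D
  set M := C * (1 + γ * D)
  have hD : 0 ≤ D := by nlinarith
  have hL : 0 ≤ L := by positivity
  have hM : 0 ≤ M * δ := by positivity
  have hV := le_mul_exp_of_le_one_add_mul_add (u := fun k ↦ a k + γ * ε * b k)
    (fun k ↦ by have := ha k; have := hb k; positivity) (by positivity) hM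
    (fun k hk ↦ two_component_lyapunov_step hC hγ hh hε hεh hδ (ha k) (hb k) hcoef
      (hrec_a k hk) (hrec_b k hk)) hn
  have hV0 : a 0 + γ * ε * b 0 ≤ M * δ := by
    have hεD : ε ≤ D := hεh.trans (by nlinarith)
    have : γ * ε * b 0 ≤ γ * D * (C * δ) :=
      mul_le_mul (mul_le_mul_of_nonneg_left hεD hγ) hb0 (hb 0) (by positivity)
    linarith
  have hnh : n * h ≤ T := le_trans (by gcongr) hNT
  calc a n ≤ a n + γ * ε * b n := le_add_of_nonneg_right (by have := hb n; positivity)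
    _ ≤ (M * δ + n * (M * δ)) * exp (n * (L * h)) := by
      refine hV.trans ?_
      gcongr
    _ = (n + 1) * M * δ * exp (L * (n * h)) := by ring_nf
    _ ≤ (T + 1) / h * M * δ * exp (L * T) := by
      have hcount : (n : ℝ) + 1 ≤ (T + 1) / h := by rw [le_div_iff₀ hh]; nlinarith
      have : 0 ≤ T := le_trans (by positivity) hnh
      gcongr
    _ = exp (L * T) * (T + 1) * M * δ / h := by ring

theorem two_component_stiff_le {β A : ℝ} (hβ0 : 0 ≤ β) (hβ1 : β < 1) (hαβ : α + C * ε ≤ β)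
    (hb : ∀ n, 0 ≤ b n) (hC : 0 ≤ C) (ha : ∀ n ≤ N, a n ≤ A * δ / h)
    (hrec_b : ∀ n < N, b (n + 1) ≤ (α + C * ε) * b n + C * a n + C * δ / h)
    {n : ℕ} (hn : n ≤ N) : b n ≤ max (b 0) (C / (1 - β) * (A + 1) * δ / h) := by
  have hf : C / (1 - β) * (A + 1) * δ / h = C * (A + 1) * δ / h / (1 - β) := by ring
  rw [hf]
  refine le_max_div_one_sub_of_le_mul_add hβ0 hβ1 (fun k hk ↦ ?_) hn
  calc b (k + 1) ≤ (α + C * ε) * b k + C * a k + C * δ / h := hrec_b k hk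
    _ ≤ β * b k + C * (A * δ / h) + C * δ / h := by
      gcongr
      · exact hb k
      · exact ha k hk.le
    _ = β * b k + C * (A + 1) * δ / h := by ring

end TwoComponent

theorem two_component_recurrence_estimate.{u, v}
    (α C D T : ℝ) (hα : 0 ≤ α) (hα1 : α < 1) (hC : 0 ≤ C) (hD : 0 < D) (hT : 0 < T)
    (p : ℕ) :
    ∃ K > (0 : ℝ), ∃ h₀ > (0 : ℝ),
      ∀ (E : Type u) (F : Type v) [NormedAddCommGroup E] [NormedSpace ℝ E]
        [NormedAddCommGroup F] [NormedSpace ℝ F],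
      ∀ h ∈ Set.Ioc (0 : ℝ) h₀, ∀ ε ∈ Set.Ioc (0 : ℝ) (D * h),
      ∀ N : ℕ, (N : ℝ) * h ≤ T →
      ∀ (x : ℕ → E) (z : ℕ → F),
        ‖x 0‖ ≤ C * ε ^ (p + 1) → ‖z 0‖ ≤ C * ε ^ (p + 1) →
        (∀ n, 1 ≤ n → n ≤ N →
          ‖x n‖ ≤ (1 + C * h) * ‖x (n - 1)‖ + C * ε * ‖z (n - 1)‖ + C * ε ^ (p + 1)) →
        (∀ n, 1 ≤ n → n ≤ N →
          ‖z n‖ ≤ (α + C * ε) * ‖z (n - 1)‖ + C * ‖x (n - 1)‖ + C * ε ^ (p + 1) / h) →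
        ∀ n ≤ N, ‖x n‖ ≤ K * ε ^ (p + 1) / h ∧ ‖z n‖ ≤ K * ε ^ (p + 1) / h := by
  obtain ⟨β, hαβ, hβ1⟩ := exists_between hα1
  set γ := C / (1 - β)
  have hγ : 0 ≤ γ := div_nonneg hC (by linarith)
  set K₁ := exp ((C + γ * C * D) * T) * (T + 1) * (C * (1 + γ * D))
  have hK₁ : 0 ≤ K₁ := by positivity
  have hγK₁ : 0 ≤ γ * (K₁ + 1) := by positivity
  refine ⟨K₁ + γ * (K₁ + 1) + C + 1, by positivity, min 1 ((β - α) / (C * D + 1)),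
    lt_min one_pos (div_pos (by linarith) (by positivity)), ?_⟩
  intro E F _ _ _ _ h ⟨hh, hh₀⟩ ε ⟨hε, hεh⟩ N hNT x z hx0 hz0 hx hz n hn
  have hh1 : h ≤ 1 := hh₀.trans (min_le_left _ _)
  have hstiff : α + C * ε ≤ β :=
    add_mul_le_of_le_div hC hD.le hh.le hεh (hh₀.trans (min_le_right _ _))
  have hrec_x : ∀ k < N, ‖x (k + 1)‖ ≤
      (1 + C * h) * ‖x k‖ + C * ε * ‖z k‖ + C * ε ^ (p + 1) := fun k hk ↦ by
    simpa using hx (k + 1) (by omega) hk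
  have hrec_z : ∀ k < N, ‖z (k + 1)‖ ≤
      (α + C * ε) * ‖z k‖ + C * ‖x k‖ + C * ε ^ (p + 1) / h := fun k hk ↦ by
    simpa using hz (k + 1) (by omega) hk
  have hx_bound : ∀ k ≤ N, ‖x k‖ ≤ K₁ * ε ^ (p + 1) / h := fun k _ ↦
    two_component_nonstiff_le hC (by positivity) hh hh1 hε.le hεh (by positivity) hNT
      (add_div_one_sub_mul_le hC hβ1 hstiff) (fun _ ↦ norm_nonneg _) (fun _ ↦ norm_nonneg _)
      hx0 hz0 hrec_x hrec_z ‹_›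
  have hz_bound : ‖z n‖ ≤ max ‖z 0‖ (γ * (K₁ + 1) * ε ^ (p + 1) / h) :=
    two_component_stiff_le (by linarith) hβ1 hstiff (fun _ ↦ norm_nonneg _) hC hx_bound hrec_z hn
  have hz0' : ‖z 0‖ ≤ C * ε ^ (p + 1) / h := hz0.trans (le_div_self (by positivity) hh hh1)
  refine ⟨(hx_bound n hn).trans ?_, hz_bound.trans (max_le (hz0'.trans ?_) ?_)⟩ <;>
    gcongr <;> linarith
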